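/- Let F be a finite field, let 1 ≤ b < c, and let G be a b×c minimal-basic polynomial generator matrix of a convolutional code C with degree δ = Σ_i ν_i ≥ 1, and set T = T_{dfree}(C). Then every nonzero codeword that starts at time 0 accumulates at least the free distance of weight within its first T segments: for every u ∈ F[[z]]^b whose 0-th segment (coeff_0(u_1),…,coeff_0(u_b)) is nonzero, the total Hamming weight of the segments 0,…,T−1 of u·G is at least d_free(C). -/

import Mathlib

open Polynomial Matrix

/-- The encoding map of a convolutional code with polynomial generator matrix `G`:
an information sequence `u ∈ F[[z]]^b` is mapped to the codeword `u · G ∈ F[[z]]^c`. -/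
noncomputable def encode {F : Type*} [Field F] {b c : ℕ}
    (G : Matrix (Fin b) (Fin c) (Polynomial F)) (u : Fin b → PowerSeries F) :
    Fin c → PowerSeries F :=
  fun j => ∑ i, u i * (G i j : PowerSeries F)

/-- Hamming weight of `v ∈ F[[z]]^c`: the extended-natural-number cardinality of the
set of pairs `(l, t)` such that `coeff_t (v_l) ≠ 0`. -/
noncomputable def wH {F : Type*} [Field F] {c : ℕ} (v : Fin c → PowerSeries F) : ℕ∞ :=
  {p : Fin c × ℕ | PowerSeries.coeff (R := F) p.2 (v p.1) ≠ 0}.encard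

/-- Free distance of the convolutional code generated by `G`. -/
noncomputable def dfree {F : Type*} [Field F] {b c : ℕ}
    (G : Matrix (Fin b) (Fin c) (Polynomial F)) : ℕ∞ :=
  sInf {w : ℕ∞ | ∃ v : Fin c → PowerSeries F,
    (∃ u : Fin b → PowerSeries F, v = encode G u) ∧ v ≠ 0 ∧ w = wH v}

/-- Total Hamming weight of segments `0, …, j-1` of `v`. -/
noncomputable def truncWeight {F : Type*} [Field F] {c : ℕ}
    (v : Fin c → PowerSeries F) (j : ℕ) : ℕ∞ :=
  {p : Fin c × ℕ | p.2 < j ∧ PowerSeries.coeff (R := F) p.2 (v p.1) ≠ 0}.encard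

/-- `i`-th row degree of `G`: the maximum of the natural degrees of the entries of row `i`. -/
def rowDeg {F : Type*} [Field F] {b c : ℕ}
    (G : Matrix (Fin b) (Fin c) (Polynomial F)) (i : Fin b) : ℕ :=
  Finset.univ.sup fun j => (G i j).natDegree

/-- Degree `δ` of `G`: the sum of its row degrees. -/
def degG {F : Type*} [Field F] {b c : ℕ}
    (G : Matrix (Fin b) (Fin c) (Polynomial F)) : ℕ :=
  ∑ i, rowDeg G i

/-- The controller-canonical encoder state `σ_t(u)` of `G` is nonzero: some component
`coeff_{t-s} (u_i)` with `1 ≤ s ≤ ν_i` (and `s ≤ t`, since coefficients with negative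
index are taken to be `0`) is nonzero. -/
def stateNonzero {F : Type*} [Field F] {b c : ℕ}
    (G : Matrix (Fin b) (Fin c) (Polynomial F)) (u : Fin b → PowerSeries F) (t : ℕ) : Prop :=
  ∃ i : Fin b, ∃ s : ℕ, 1 ≤ s ∧ s ≤ rowDeg G i ∧ s ≤ t ∧
    PowerSeries.coeff (R := F) (t - s) (u i) ≠ 0

/-- `G` is a generator matrix: it has rank `b` over the field of rational functions `F(z)`. -/
def IsGenerator {F : Type*} [Field F] {b c : ℕ}
    (G : Matrix (Fin b) (Fin c) (Polynomial F)) : Prop :=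
  (G.map (algebraMap (Polynomial F) (RatFunc F))).rank = b

/-- `G` is basic: it has a polynomial right inverse. -/
def IsBasic {F : Type*} [Field F] {b c : ℕ}
    (G : Matrix (Fin b) (Fin c) (Polynomial F)) : Prop :=
  ∃ H : Matrix (Fin c) (Fin b) (Polynomial F), G * H = 1

/-- The high-order coefficient matrix `[G]_h` of `G`. -/
def highOrder {F : Type*} [Field F] {b c : ℕ}
    (G : Matrix (Fin b) (Fin c) (Polynomial F)) : Matrix (Fin b) (Fin c) F :=
  fun i j => (G i j).coeff (rowDeg G i)

/-- `G` is minimal-basic: basic, and `[G]_h` has full row rank `b` over `F`. -/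
def IsMinimalBasic {F : Type*} [Field F] {b c : ℕ}
    (G : Matrix (Fin b) (Fin c) (Polynomial F)) : Prop :=
  IsBasic G ∧ (highOrder G).rank = b

/-- `(u, j)` determines an element of `S_{dfree}`: `j > 0`, the total Hamming weight of
segments `0, …, j-1` of `u·G` is strictly less than `d_free`, and `σ_t(u) ≠ 0` for all
`1 ≤ t ≤ j`. -/
def SdfreePair {F : Type*} [Field F] {b c : ℕ}
    (G : Matrix (Fin b) (Fin c) (Polynomial F)) (u : Fin b → PowerSeries F) (j : ℕ) : Prop :=
  0 < j ∧ truncWeight (encode G u) j < dfree G ∧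
    ∀ t : ℕ, 1 ≤ t → t ≤ j → stateNonzero G u t

/-- `T_{dfree}(C)`: one plus the supremum of all `j` such that some `u` makes `(u, j)`
determine an element of `S_{dfree}`. -/
noncomputable def Tdfree {F : Type*} [Field F] {b c : ℕ}
    (G : Matrix (Fin b) (Fin c) (Polynomial F)) : ℕ∞ :=
  1 + sSup {x : ℕ∞ | ∃ j : ℕ, x = (j : ℕ∞) ∧ ∃ u : Fin b → PowerSeries F, SdfreePair G u j}

/-! If the encoder state stays nonzero at all times `1, …, T` while the first `T` segments of
`u·G` weigh less than `d_free`, then `(u, T)` lies in `S_dfree`, which forces `T < T_dfree`.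
Otherwise the state vanishes at some time `t ≤ T`. Then `u mod z^t` drives the encoder back to
the zero state, so its codeword agrees with `u·G` before time `t` and vanishes from time `t` on;
it is nonzero because `G` has a polynomial right inverse, so its whole weight, at least
`d_free`, already lies in the first `T` segments of `u·G`. -/

namespace PowerSeries

theorem coeff_trunc_mul_of_lt {R : Type*} [CommSemiring R] {f g : R⟦X⟧}
    {n t : ℕ} (h : n < t) : coeff n ((trunc t f : R⟦X⟧) * g) = coeff n (f * g) := by
  rw [← coeff_coe_trunc_of_lt h, trunc_trunc_mul, coeff_coe_trunc_of_lt h]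

theorem coeff_trunc_mul_eq_zero {R : Type*} [CommSemiring R] {f : R⟦X⟧}
    {p : Polynomial R} {t ν n : ℕ} (hp : p.natDegree ≤ ν)
    (hf : ∀ k < t, t ≤ k + ν → coeff k f = 0) (hn : t ≤ n) :
    coeff n ((trunc t f : R⟦X⟧) * (p : R⟦X⟧)) = 0 := by
  rw [coeff_mul]
  refine Finset.sum_eq_zero fun ⟨k, m⟩ hkm => ?_
  rw [Finset.HasAntidiagonal.mem_antidiagonal] at hkm
  rw [Polynomial.coeff_coe, Polynomial.coeff_coe, coeff_trunc]
  split_ifs with hk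
  · by_cases hm : m ≤ ν
    · rw [hf k hk (by omega), zero_mul]
    · rw [p.coeff_eq_zero_of_natDegree_lt (by omega), mul_zero]
  · rw [zero_mul]

end PowerSeries

section Convolutional

variable {F : Type*} [Field F] {b c : ℕ} {G : Matrix (Fin b) (Fin c) (Polynomial F)}

theorem encode_eq_vecMul (G : Matrix (Fin b) (Fin c) (Polynomial F))
    (u : Fin b → PowerSeries F) :
    encode G u = u ᵥ* G.map Polynomial.coeToPowerSeries.ringHom :=
  rfl

theorem IsBasic.encode_injective (hG : IsBasic G) : Function.Injective (encode G) := by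
  obtain ⟨H, hGH⟩ := hG
  have hleft : ∀ u, encode G u ᵥ* H.map Polynomial.coeToPowerSeries.ringHom = u := fun u => by
    rw [encode_eq_vecMul, vecMul_vecMul, ← Matrix.map_mul, hGH, Matrix.map_one _ (map_zero _)
      (map_one _), vecMul_one]
  exact Function.LeftInverse.injective (g := (· ᵥ* H.map Polynomial.coeToPowerSeries.ringHom))
    hleft

@[simp]
theorem encode_zero (G : Matrix (Fin b) (Fin c) (Polynomial F)) : encode G 0 = 0 := by
  simp [encode_eq_vecMul]

theorem dfree_le_wH_encode {u : Fin b → PowerSeries F} (h : encode G u ≠ 0) :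
    dfree G ≤ wH (encode G u) :=
  sInf_le ⟨encode G u, ⟨u, rfl⟩, h, rfl⟩

noncomputable def truncInput (t : ℕ) (u : Fin b → PowerSeries F) : Fin b → PowerSeries F :=
  fun i => PowerSeries.trunc t (u i)

theorem truncInput_ne_zero {t : ℕ} {u : Fin b → PowerSeries F} (ht : 0 < t)
    (hu : ∃ i, PowerSeries.coeff 0 (u i) ≠ 0) : truncInput t u ≠ 0 := by
  obtain ⟨i, hi⟩ := hu
  intro h
  apply hi
  rw [← PowerSeries.coeff_coe_trunc_of_lt ht]
  exact congrArg (PowerSeries.coeff 0) (congrFun h i)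

theorem coeff_encode_truncInput_of_lt (G : Matrix (Fin b) (Fin c) (Polynomial F))
    (u : Fin b → PowerSeries F) (j : Fin c) {n t : ℕ} (h : n < t) :
    PowerSeries.coeff n (encode G (truncInput t u) j) = PowerSeries.coeff n (encode G u j) := by
  simp only [encode, truncInput, map_sum, PowerSeries.coeff_trunc_mul_of_lt h]

theorem coeff_encode_truncInput_eq_zero {u : Fin b → PowerSeries F} {t : ℕ}
    (hs : ¬ stateNonzero G u t) (j : Fin c) {n : ℕ} (hn : t ≤ n) :
    PowerSeries.coeff n (encode G (truncInput t u) j) = 0 := by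
  simp only [stateNonzero, not_exists, not_and, not_not] at hs
  simp only [encode, truncInput, map_sum]
  refine Finset.sum_eq_zero fun i _ => PowerSeries.coeff_trunc_mul_eq_zero (ν := rowDeg G i)
    (Finset.le_sup (f := fun j => (G i j).natDegree) (Finset.mem_univ j)) ?_ hn
  intro k hk hkν
  simpa [Nat.sub_sub_self hk.le] using hs i (t - k) (by omega) (by omega) (by omega)

theorem wH_encode_truncInput_le {u : Fin b → PowerSeries F} {t T : ℕ}
    (hs : ¬ stateNonzero G u t) (htT : t ≤ T) :
    wH (encode G (truncInput t u)) ≤ truncWeight (encode G u) T := by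
  apply Set.encard_mono
  rintro ⟨j, n⟩ (hjn : PowerSeries.coeff n _ ≠ 0)
  have hnt : n < t := not_le.1 fun h => hjn (coeff_encode_truncInput_eq_zero hs j h)
  exact ⟨hnt.trans_le htT, coeff_encode_truncInput_of_lt G u j hnt ▸ hjn⟩

theorem dfree_le_truncWeight_of_not_stateNonzero (hG : IsBasic G) {u : Fin b → PowerSeries F}
    (hu : ∃ i, PowerSeries.coeff 0 (u i) ≠ 0) {t T : ℕ} (ht : 1 ≤ t) (htT : t ≤ T)
    (hs : ¬ stateNonzero G u t) : dfree G ≤ truncWeight (encode G u) T := by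
  have hne : encode G (truncInput t u) ≠ 0 := by
    rw [← encode_zero G]
    exact hG.encode_injective.ne (truncInput_ne_zero ht hu)
  exact (dfree_le_wH_encode hne).trans (wH_encode_truncInput_le hs htT)

theorem one_le_Tdfree (G : Matrix (Fin b) (Fin c) (Polynomial F)) : 1 ≤ Tdfree G :=
  le_self_add

theorem SdfreePair.lt_Tdfree {u : Fin b → PowerSeries F} {j : ℕ} (h : SdfreePair G u j) :
    (j : ℕ∞) < Tdfree G :=
  calc (j : ℕ∞) < 1 + j := by norm_cast; omega
    _ ≤ Tdfree G := by
      unfold Tdfree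
      gcongr
      exact le_sSup ⟨j, rfl, u, h⟩

end Convolutional

theorem weight_ge_dfree_within_Tdfree_general
    {F : Type*} [Field F] {b c : ℕ}
    (G : Matrix (Fin b) (Fin c) (Polynomial F))
    (hMB : IsMinimalBasic G)
    (T : ℕ) (hT : (T : ℕ∞) = Tdfree G) :
    ∀ u : Fin b → PowerSeries F, (∃ i : Fin b, PowerSeries.coeff (R := F) 0 (u i) ≠ 0) →
      dfree G ≤ truncWeight (encode G u) T := by
  intro u hu
  by_contra hlt
  rw [not_le] at hlt
  by_cases hstate : ∀ t : ℕ, 1 ≤ t → t ≤ T → stateNonzero G u t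
  · have hT1 : 0 < T := by exact_mod_cast hT ▸ one_le_Tdfree G
    exact (hT ▸ SdfreePair.lt_Tdfree ⟨hT1, hlt, hstate⟩ : (T : ℕ∞) < T).false
  · push Not at hstate
    obtain ⟨t, ht1, htT, hs⟩ := hstate
    exact (dfree_le_truncWeight_of_not_stateNonzero hMB.1 hu ht1 htT hs).not_gt hlt

/-- for a minimal-basic generator matrix of degree `δ ≥ 1`, with
`T = T_{dfree}(C)`, every codeword whose `0`-th input segment is nonzero accumulates at
least the free distance of Hamming weight within its first `T` segments. -/
theorem weight_ge_dfree_within_Tdfree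
    {F : Type*} [Field F] [Fintype F] {b c : ℕ} (hb : 1 ≤ b) (hbc : b < c)
    (G : Matrix (Fin b) (Fin c) (Polynomial F))
    (hGen : IsGenerator G) (hMB : IsMinimalBasic G) (hδ : 1 ≤ degG G)
    (T : ℕ) (hT : (T : ℕ∞) = Tdfree G) :
    ∀ u : Fin b → PowerSeries F, (∃ i : Fin b, PowerSeries.coeff (R := F) 0 (u i) ≠ 0) →
      dfree G ≤ truncWeight (encode G u) T :=
  weight_ge_dfree_within_Tdfree_general G hMB T hT
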